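/- Let R be a commutative Noetherian ring, I an ideal of R, E an injective R-module, and K a submodule of E. Setting L = E/K, one has (L/Γ_I(L)) ⊗_R R/I = 0, i.e., L/Γ_I(L) = I·(L/Γ_I(L)). -/

import Mathlib

open CategoryTheory

noncomputable section

universe u

/-- `Tor_i^R(A, B)` as an object of `ModuleCat R`. -/
def TorMod (R : Type u) [CommRing R] (i : ℕ) (A B : ModuleCat.{u} R) : ModuleCat.{u} R :=
  ((Tor (ModuleCat.{u} R) i).obj A).obj B

/-- `Ext^i_R(A, B)` as an object of `ModuleCat R`. -/
def ExtMod (R : Type u) [CommRing R] (i : ℕ) (A B : ModuleCat.{u} R) : ModuleCat.{u} R :=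
  ((Ext R (ModuleCat.{u} R) i).obj (Opposite.op A)).obj B

/-- `H^i_I(M)`, the `i`-th local cohomology of `M` with support in `I`. -/
def LC (R : Type u) [CommRing R] (I : Ideal R) (i : ℕ) (M : ModuleCat.{u} R) : ModuleCat.{u} R :=
  (localCohomology I i).obj M

/-- `M` is `I`-cofinite: `Supp M ⊆ V(I)` and all `Ext^i_R(R/I, M)` are finitely generated. -/
def IsCofinite (R : Type u) [CommRing R] (I : Ideal R) (M : ModuleCat.{u} R) : Prop :=
  Module.support R M ⊆ PrimeSpectrum.zeroLocus (I : Set R) ∧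
    ∀ i : ℕ, Module.Finite R (ExtMod R i (ModuleCat.of R (R ⧸ I)) M)

/-- `Γ_I(M) = ⋃ₙ (0 :_M Iⁿ)`, the `I`-torsion submodule of `M`. -/
def torsionGamma (R : Type u) [CommRing R] (I : Ideal R) (M : Type u) [AddCommGroup M]
    [Module R M] : Submodule R M :=
  ⨆ n : ℕ, Submodule.torsionBySet R M ((I ^ n : Ideal R) : Set R)

/-! By Artin–Rees, `(0 :_R I) ∩ Iⁿ = 0` for some `n`, so `R` embeds into `R/(0 :_R I) × R/Iⁿ`;
extending `r ↦ r • e` along this embedding splits every `e` in the injective module `E` as a sum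
of an element killed by `(0 :_R I)` and one killed by `Iⁿ`. Writing `I = (g₁, …, gₖ)`, the embedding
`R/(0 :_R I) ↪ Rᵏ`, `r ↦ (r gᵢ)ᵢ`, shows in the same way that elements of `E` killed by `(0 :_R I)`
lie in `I E`. Hence `E = I E + (0 :_E Iⁿ)`, and in `L/Γ_I(L)` the second summand vanishes. -/

universe v

open Submodule

theorem map_torsionBySet_pow_le_torsionGamma {R : Type u} [CommRing R] {M N : Type u}
    [AddCommGroup M] [Module R M] [AddCommGroup N] [Module R N] (I : Ideal R) (n : ℕ)
    (f : M →ₗ[R] N) :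
    (torsionBySet R M ↑(I ^ n)).map f ≤ torsionGamma R I N := by
  rintro _ ⟨x, hx, rfl⟩
  refine le_iSup (fun n ↦ torsionBySet R N ↑(I ^ n)) n ?_
  rw [SetLike.mem_coe, mem_torsionBySet_iff] at hx
  rw [mem_torsionBySet_iff]
  intro a
  rw [← map_smul, hx a, map_zero]

theorem Ideal.exists_pow_smul_top_inf_eq_bot {R M : Type*} [CommRing R] [IsNoetherianRing R]
    [AddCommGroup M] [Module R M] [Module.Finite R M] (I : Ideal R) {N : Submodule R M}
    (hN : I • N = ⊥) : ∃ n, I ^ n • ⊤ ⊓ N = ⊥ := by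
  obtain ⟨k, hk⟩ := I.exists_pow_inf_eq_pow_smul N
  refine ⟨k + 1, ?_⟩
  rw [hk (k + 1) k.le_succ, Nat.add_sub_cancel_left, pow_one, eq_bot_iff, ← hN]
  exact smul_mono_right _ inf_le_right

theorem Ideal.exists_annihilator_inf_pow_eq_bot {R : Type*} [CommRing R] [IsNoetherianRing R]
    (I : Ideal R) : ∃ n, I.annihilator ⊓ I ^ n = ⊥ := by
  have hI : I • (I.annihilator : Submodule R R) = ⊥ := by
    rw [smul_eq_mul, mul_comm, ← smul_eq_mul, annihilator_smul]
  simpa [smul_eq_mul, Ideal.mul_top, inf_comm] using I.exists_pow_smul_top_inf_eq_bot hI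

section Injective

variable {R : Type*} {E : Type v} [CommRing R] [AddCommGroup E] [Module R E] [Small.{v} R]
  [Module.Injective R E]

theorem Module.Injective.torsionBySet_sup_eq_top {J J' : Ideal R} (h : J ⊓ J' = ⊥) :
    torsionBySet R E J ⊔ torsionBySet R E J' = ⊤ := by
  refine eq_top_iff.2 fun e _ ↦ ?_
  have hφ : Function.Injective (J.mkQ.prod J'.mkQ) := by
    rw [← LinearMap.ker_eq_bot, LinearMap.ker_prod, J.ker_mkQ, J'.ker_mkQ, h]
  obtain ⟨F, hF⟩ := Module.Injective.extension_property R E _ _ _ hφ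
    (LinearMap.toSpanSingleton R E e)
  have he : e = F (J.mkQ 1, 0) + F (0, J'.mkQ 1) := by
    rw [← map_add, Prod.mk_add_mk, add_zero, zero_add]
    simpa using (LinearMap.congr_fun hF 1).symm
  rw [he]
  refine add_mem_sup ?_ ?_ <;> rw [mem_torsionBySet_iff] <;> rintro ⟨a, ha⟩ <;>
    rw [← map_smul, Prod.smul_mk, smul_zero, ← map_smul, smul_eq_mul, mul_one, mkQ_apply,
      (Quotient.mk_eq_zero _).2 ha, Prod.mk_zero_zero, map_zero]

theorem Module.Injective.torsionBySet_annihilator_le_smul_top {I : Ideal R} (hI : I.FG) :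
    torsionBySet R E I.annihilator ≤ I • ⊤ := by
  obtain ⟨k, g, hg⟩ := Submodule.fg_iff_exists_fin_generating_family.1 hI
  intro e he
  let σ : R →ₗ[R] (Fin k → R) := LinearMap.pi fun i ↦ LinearMap.toSpanSingleton R R (g i)
  have hσ : Function.Injective ((LinearMap.ker σ).liftQ σ le_rfl) := by
    rw [← LinearMap.ker_eq_bot, ker_liftQ_eq_bot _ _ _ le_rfl]
  have hker : LinearMap.ker σ ≤ LinearMap.ker (LinearMap.toSpanSingleton R E e) := by
    intro r hr
    have hr : r ∈ I.annihilator := by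
      rw [← hg, mem_annihilator_span]
      rintro ⟨_, i, rfl⟩
      exact congr_fun (LinearMap.mem_ker.1 hr) i
    exact (mem_torsionBySet_iff _ e).1 he ⟨r, hr⟩
  obtain ⟨F, hF⟩ :=
    Module.Injective.extension_property R E _ _ _ hσ ((LinearMap.ker σ).liftQ _ hker)
  have he : e = F g := by
    have := LinearMap.congr_fun hF ((LinearMap.ker σ).mkQ 1)
    have hσ1 : σ 1 = g := funext fun i ↦ one_smul R (g i)
    rwa [LinearMap.comp_apply, mkQ_apply, liftQ_apply, liftQ_apply, hσ1,
      LinearMap.toSpanSingleton_apply, one_smul, eq_comm] at this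
  rw [he, pi_eq_sum_univ g, map_sum]
  refine sum_mem fun i _ ↦ ?_
  rw [map_smul]
  exact smul_mem_smul (hg ▸ subset_span ⟨i, rfl⟩) mem_top

theorem Module.Injective.exists_smul_top_sup_torsionBySet_pow_eq_top [IsNoetherianRing R]
    (I : Ideal R) : ∃ n, I • ⊤ ⊔ torsionBySet R E ↑(I ^ n) = ⊤ := by
  obtain ⟨n, hn⟩ := I.exists_annihilator_inf_pow_eq_bot
  refine ⟨n, top_le_iff.1 ?_⟩
  calc ⊤ = torsionBySet R E I.annihilator ⊔ torsionBySet R E ↑(I ^ n) :=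
        (torsionBySet_sup_eq_top hn).symm
    _ ≤ I • ⊤ ⊔ torsionBySet R E ↑(I ^ n) :=
        sup_le_sup_right (torsionBySet_annihilator_le_smul_top (IsNoetherian.noetherian I)) _

end Injective

theorem stmt2 (R : Type u) [CommRing R] [IsNoetherianRing R] (I : Ideal R)
    (E : Type u) [AddCommGroup E] [Module R E] (hE : Module.Injective R E)
    (K : Submodule R E) :
    I • (⊤ : Submodule R ((E ⧸ K) ⧸ torsionGamma R I (E ⧸ K))) = ⊤ := by
  obtain ⟨n, hE_eq⟩ := hE.exists_smul_top_sup_torsionBySet_pow_eq_top I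
  let π := (torsionGamma R I (E ⧸ K)).mkQ ∘ₗ K.mkQ
  have hπ_torsion : (torsionBySet R E ↑(I ^ n)).map π = ⊥ := by
    rw [eq_bot_iff, map_comp, ← (torsionGamma R I (E ⧸ K)).mkQ_map_self]
    exact map_mono (map_torsionBySet_pow_le_torsionGamma I n K.mkQ)
  have hπ_top : (⊤ : Submodule R E).map π = ⊤ := by
    rw [Submodule.map_top, LinearMap.range_eq_top]
    exact (mkQ_surjective _).comp (mkQ_surjective _)
  refine eq_top_iff.2 ?_
  calc ⊤ = (I • ⊤ ⊔ torsionBySet R E ↑(I ^ n)).map π := by rw [hE_eq, hπ_top]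
    _ = I • (⊤ : Submodule R E).map π := by
      rw [Submodule.map_sup, hπ_torsion, sup_bot_eq, map_smul'']
    _ ≤ I • ⊤ := smul_mono_right _ le_top
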